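/- Let G be a group and N a normal subgroup of G such that N (as a group) has the Schreier property and the quotient group G/N is countable. Then G has the Schreier property if and only if G/N is finitely generated. -/

import Mathlib

/-!
Lifting a finite generating set of `G/N` gives a finitely generated `H ≤ G` with `G = H N`.
Writing each element of a countable `s ⊆ G` as `h n`, the countably many factors `n` lie in a
finitely generated subgroup `K` of `N`, so `s ⊆ H ⊔ K`. Conversely, the Schreier property passes
to quotients, and a countable group with the Schreier property is finitely generated: it is a
countable subset of itself.
-/

/-- A group `G` has the Schreier property if every countable subset of `G` is contained
in a finitely generated subgroup of `G`. -/
def SchreierProperty (G : Type*) [Group G] : Prop :=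
  ∀ s : Set G, s.Countable → ∃ H : Subgroup G, H.FG ∧ s ⊆ ↑H

section

variable {G Q : Type*} [Group G] [Group Q]

theorem Subgroup.FG.map {P : Subgroup G} (hP : P.FG) (f : G →* Q) : (P.map f).FG := by
  classical
  obtain ⟨S, rfl⟩ := hP
  exact ⟨S.image f, by rw [Finset.coe_image, MonoidHom.map_closure]⟩

theorem Subgroup.exists_fg_map_eq_top [Group.FG Q] {f : G →* Q} (hf : Function.Surjective f) :
    ∃ H : Subgroup G, H.FG ∧ H.map f = ⊤ := by
  classical
  obtain ⟨S, hS⟩ := Group.fg_def.1 ‹Group.FG Q›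
  refine ⟨closure (S.image (Function.surjInv hf) : Set G), ⟨_, rfl⟩, ?_⟩
  rw [MonoidHom.map_closure, Finset.coe_image, ← Set.image_comp,
    (Function.rightInverse_surjInv hf).comp_eq_id, Set.image_id, hS]

namespace SchreierProperty

theorem of_surjective (hG : SchreierProperty G) {f : G →* Q} (hf : Function.Surjective f) :
    SchreierProperty Q := by
  intro s hs
  obtain ⟨H, hH, hsH⟩ := hG (Function.surjInv hf '' s) (hs.image _)
  exact ⟨H.map f, hH.map f, fun q hq => ⟨_, hsH ⟨q, hq, rfl⟩, Function.surjInv_eq hf q⟩⟩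

theorem fg [Countable G] (hG : SchreierProperty G) : Group.FG G := by
  obtain ⟨H, hH, hunivH⟩ := hG Set.univ Set.countable_univ
  rw [Set.univ_subset_iff, Subgroup.coe_eq_univ] at hunivH
  exact Group.fg_def.2 (hunivH ▸ hH)

theorem of_sup_eq_top {N : Subgroup G} [N.Normal] (hN : SchreierProperty N) {H : Subgroup G}
    (hH : H.FG) (hHN : H ⊔ N = ⊤) : SchreierProperty G := by
  intro s hs
  have hdecomp (x : G) : ∃ y ∈ H, ∃ z ∈ N, y * z = x :=
    Subgroup.mem_sup_of_normal_right.1 (hHN ▸ Subgroup.mem_top x)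
  choose y hy z hz hyz using hdecomp
  obtain ⟨K, hK, hsK⟩ := hN ((fun x => (⟨z x, hz x⟩ : N)) '' s) (hs.image _)
  refine ⟨H ⊔ K.map N.subtype, hH.sup (hK.map _), fun x hx => ?_⟩
  rw [← hyz x]
  exact Subgroup.mul_mem_sup (hy x) ⟨_, hsK ⟨x, hx, rfl⟩, rfl⟩

end SchreierProperty

end

/-- if `N` is a normal subgroup of `G` with the Schreier property and the
quotient `G/N` is countable, then `G` has the Schreier property iff `G/N` is finitely
generated. -/
theorem stmt19 (G : Type*) [Group G] (N : Subgroup G) [N.Normal]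
    (hN : SchreierProperty ↥N) [Countable (G ⧸ N)] :
    SchreierProperty G ↔ Group.FG (G ⧸ N) := by
  constructor
  · intro hG
    exact (hG.of_surjective (QuotientGroup.mk'_surjective N)).fg
  · intro _
    obtain ⟨H, hH, hHQ⟩ := Subgroup.exists_fg_map_eq_top (QuotientGroup.mk'_surjective N)
    refine hN.of_sup_eq_top hH ?_
    rw [← QuotientGroup.ker_mk' N, ← Subgroup.comap_map_eq, hHQ, Subgroup.comap_top]
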